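/- Let $\mathcal{L}$ be a finite set of literals, $\mathcal{A}$ a finite set of STRIPS actions with $add(a) \cap del(a) = \emptyset$ for all $a$, and $g \subseteq \mathcal{L}$ a goal. Let $C^*$ be the closure of $\{g\}$ under the regression operator $Reg(c) = \{ pre(a) \cup (c \setminus add(a)) : a \in \mathcal{A},\ c \cap ((pre(a) \cup add(a)) \setminus del(a)) \neq \emptyset,\ c \cap del(a) = \emptyset \}$. Suppose $(s_0, a_1, s_1, \ldots, a_m, s_m)$ is an execution with $pre(a_j) \subseteq s_{j-1}$, $s_j = (s_{j-1} \cup add(a_j)) \setminus del(a_j)$, and $g \subseteq s_m$. Then for every $k$ with $0 \le k \le m$, there exists a condition $c \in C^*$ with $c \subseteq s_{m-k}$. In particular, $s_0$ satisfies some condition in $C^*$. -/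
import Mathlib


/-- Completeness induction (Proposition 6): every state along any plan to the
goal satisfies some condition in the regression closure of the goal. -/
theorem completeness_induction {L : Type*} [Fintype L] {A : Type*}
    (Acts : Finset A) (pre add del : A → Set L)
    (hAD : ∀ a ∈ Acts, add a ∩ del a = ∅)
    (g : Set L)
    (Reg : Set L → Set (Set L))
    (hReg : ∀ c, Reg c = {x | ∃ a ∈ Acts,
      (c ∩ ((pre a ∪ add a) \ del a)).Nonempty ∧ c ∩ del a = ∅ ∧
      x = pre a ∪ (c \ add a)})
    (Cstar : Set (Set L))
    (hCstar : Cstar = ⋂₀ {X : Set (Set L) | g ∈ X ∧ ∀ c ∈ X, Reg c ⊆ X})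
    (m : ℕ) (act : ℕ → A) (st : ℕ → Set L)
    (hact : ∀ j < m, act j ∈ Acts)
    (hpre : ∀ j < m, pre (act j) ⊆ st j)
    (hstep : ∀ j < m, st (j + 1) = (st j ∪ add (act j)) \ del (act j))
    (hgoal : g ⊆ st m) :
    ∀ k ≤ m, ∃ c ∈ Cstar, c ⊆ st (m - k) := by
  have hgC : g ∈ Cstar := by
    rw [hCstar]; intro X hX; exact hX.1
  have hclosed : ∀ c ∈ Cstar, Reg c ⊆ Cstar := by
    intro c hc x hx
    rw [hCstar] at hc ⊢
    intro X hX
    exact hX.2 c (hc X hX) hx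
  intro k
  induction k with
  | zero => intro _; exact ⟨g, hgC, by simpa using hgoal⟩
  | succ k ih =>
    intro hk
    have hk' : k ≤ m := Nat.le_of_succ_le hk
    obtain ⟨c, hcC, hcs⟩ := ih hk'
    set j := m - (k + 1) with hj
    have hjm : j < m := by omega
    have hmk : m - k = j + 1 := by omega
    rw [hmk] at hcs
    rw [hstep j hjm] at hcs
    by_cases hne : (c ∩ ((pre (act j) ∪ add (act j)) \ del (act j))).Nonempty
    · have hdisj : c ∩ del (act j) = ∅ := by
        ext x
        simp only [Set.mem_inter_iff, Set.mem_empty_iff_false, iff_false]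
        rintro ⟨hxc, hxd⟩
        exact (hcs hxc).2 hxd
      have hmem : pre (act j) ∪ (c \ add (act j)) ∈ Reg c := by
        rw [hReg]
        exact ⟨act j, hact j hjm, hne, hdisj, rfl⟩
      refine ⟨_, hclosed c hcC hmem, ?_⟩
      rintro x (hx | ⟨hxc, hxa⟩)
      · exact hpre j hjm hx
      · rcases (hcs hxc).1 with h | h
        · exact h
        · exact absurd h hxa
    · refine ⟨c, hcC, ?_⟩
      intro x hxc
      have h1 := hcs hxc
      rcases h1.1 with h | h
      · exact h
      · exact absurd ⟨x, hxc, Or.inr h, h1.2⟩ hne
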